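/- Let Ω = B_c(0,a) ⊂ ℂⁿ with a > 1, let E ⊆ B(0,1) (the real unit ball in ℝⁿ ⊂ ℂⁿ) be measurable and non-pluripolar. Then |sup_{B_c(0,1)} u_{E,Ω}| ≥ |sup_{B_c(0,1)} u_{B(0,1),Ω}| · |sup_{B(0,1)} u_{E,Ω}|, where u_{F,Ω} denotes the relative extremal function of F in Ω. -/

import Mathlib

open MeasureTheory Metric Set

/-- Plurisubharmonicity for `EReal`-valued functions on an open set `Ω` of a complex
normed space: upper semicontinuity together with the sub-mean value inequality on every
complex disc contained in `Ω`, the circle average being expressed via continuous majorants. -/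
def IsPSHOnE {V : Type*} [NormedAddCommGroup V] [NormedSpace ℂ V]
    (u : V → EReal) (Ω : Set V) : Prop :=
  UpperSemicontinuousOn u Ω ∧
  ∀ a ∈ Ω, ∀ b : V, ∀ r : ℝ, 0 < r →
    (∀ w : ℂ, ‖w‖ ≤ r → a + w • b ∈ Ω) →
    ∀ g : ℝ → ℝ, Continuous g →
      (∀ θ : ℝ, u (a + (circleMap 0 r θ) • b) ≤ ((g θ : ℝ) : EReal)) →
      u a ≤ (((2 * Real.pi)⁻¹ * ∫ θ in (0:ℝ)..(2 * Real.pi), g θ : ℝ) : EReal)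

/-- Plurisubharmonicity for real-valued functions. -/
def IsPSHOn {V : Type*} [NormedAddCommGroup V] [NormedSpace ℂ V]
    (f : V → ℝ) (Ω : Set V) : Prop :=
  IsPSHOnE (fun z => ((f z : ℝ) : EReal)) Ω

/-- A set is pluripolar if it is contained in the `-∞` set of a plurisubharmonic
function on the whole space which is not identically `-∞`. -/
def IsPluripolar {V : Type*} [NormedAddCommGroup V] [NormedSpace ℂ V] (E : Set V) : Prop :=
  ∃ u : V → EReal, IsPSHOnE u Set.univ ∧ (¬ ∀ z, u z = ⊥) ∧ ∀ z ∈ E, u z = ⊥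

/-- The Lelong class: entire plurisubharmonic functions of at most logarithmic growth. -/
def InLelongClass {V : Type*} [NormedAddCommGroup V] [NormedSpace ℂ V] (f : V → ℝ) : Prop :=
  IsPSHOn f Set.univ ∧ ∃ C : ℝ, ∀ z, f z ≤ Real.log (max ‖z‖ 1) + C

/-- The Siciak extremal function of a set `E`. -/
noncomputable def siciak {V : Type*} [NormedAddCommGroup V] [NormedSpace ℂ V]
    (E : Set V) (z : V) : ℝ :=
  sSup {y | ∃ f : V → ℝ, InLelongClass f ∧ (∀ x ∈ E, f x ≤ 0) ∧ y = f z}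

/-- The relative extremal function of `E` in `Ω`. -/
noncomputable def relExtremal {V : Type*} [NormedAddCommGroup V] [NormedSpace ℂ V]
    (E Ω : Set V) (z : V) : ℝ :=
  sSup {y | ∃ f : V → ℝ, IsPSHOn f Ω ∧ (∀ x ∈ Ω, f x ≤ 0) ∧ (∀ x ∈ E, f x ≤ -1) ∧ y = f z}

/-- The function `h_E` measuring local growth of plurisubharmonic functions. -/
noncomputable def hFun {V : Type*} [NormedAddCommGroup V] [NormedSpace ℂ V]
    (A E Ω : Set V) (z : V) : ℝ :=
  sSup {y | ∃ f : V → ℝ, IsPSHOn f Ω ∧ (∀ x ∈ Ω, f x ≤ 0) ∧ -1 ≤ sSup (f '' A) ∧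
    y = f z - sSup (f '' E)}

/-- The inclusion of `ℝⁿ` into `ℂⁿ`. -/
noncomputable def embedR {n : ℕ} (x : EuclideanSpace ℝ (Fin n)) : EuclideanSpace ℂ (Fin n) :=
  WithLp.toLp 2 (fun i => ((x i : ℝ) : ℂ))

/-- `γ` is the Siciak (logarithmic) capacity of `E`:
`limsup_{s→∞} ( sup_{B_c(0,s)} V_E − log s ) = −log γ`. -/
def HasSiciakCapacity {V : Type*} [NormedAddCommGroup V] [NormedSpace ℂ V]
    (E : Set V) (γ : ℝ) : Prop :=
  Filter.limsup (fun s : ℝ => sSup (siciak E '' Metric.closedBall (0 : V) s) - Real.log s)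
    Filter.atTop = -Real.log γ

/-!
If `F ⊆ Ω` and `u_{E,Ω} ≤ -c < 0` on `F`, then every competitor `f` for `u_{E,Ω}`, scaled by
`c⁻¹`, is a competitor for `u_{F,Ω}`; hence `u_{E,Ω} ≤ c · u_{F,Ω}` on `Ω`. Taking suprema over the
complex unit ball with `F` the real unit ball and `-c = sup_F u_{E,Ω}` gives the inequality.
-/

theorem upperSemicontinuousOn_coe_ereal_iff {α : Type*} [TopologicalSpace α] {f : α → ℝ}
    {s : Set α} :
    UpperSemicontinuousOn (fun z => (f z : EReal)) s ↔ UpperSemicontinuousOn f s := by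
  refine ⟨fun h x hx y hy => ?_, fun h =>
    continuous_coe_real_ereal.comp_upperSemicontinuousOn h EReal.coe_strictMono.monotone⟩
  filter_upwards [h x hx y (EReal.coe_lt_coe_iff.2 hy)] with z hz
  exact EReal.coe_lt_coe_iff.1 hz

section PSH

variable {V : Type*} [NormedAddCommGroup V] [NormedSpace ℂ V]

theorem isPSHOn_iff {f : V → ℝ} {Ω : Set V} :
    IsPSHOn f Ω ↔ UpperSemicontinuousOn f Ω ∧
      ∀ a ∈ Ω, ∀ b : V, ∀ r : ℝ, 0 < r → (∀ w : ℂ, ‖w‖ ≤ r → a + w • b ∈ Ω) →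
        ∀ g : ℝ → ℝ, Continuous g → (∀ θ : ℝ, f (a + (circleMap 0 r θ) • b) ≤ g θ) →
          f a ≤ (2 * Real.pi)⁻¹ * ∫ θ in (0:ℝ)..(2 * Real.pi), g θ := by
  simp only [IsPSHOn, IsPSHOnE, EReal.coe_le_coe_iff, upperSemicontinuousOn_coe_ereal_iff]

theorem isPSHOn_const (c : ℝ) (Ω : Set V) : IsPSHOn (fun _ => c) Ω := by
  refine isPSHOn_iff.2 ⟨upperSemicontinuousOn_const, fun a _ b r _ _ g hg hcg => ?_⟩
  have hpi : 0 < 2 * Real.pi := by positivity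
  have hint : ∫ _ in (0:ℝ)..(2 * Real.pi), c ≤ ∫ θ in (0:ℝ)..(2 * Real.pi), g θ :=
    intervalIntegral.integral_mono_on hpi.le intervalIntegrable_const
      (hg.intervalIntegrable _ _) fun θ _ => hcg θ
  rw [intervalIntegral.integral_const, sub_zero, smul_eq_mul] at hint
  rwa [le_inv_mul_iff₀ hpi]

theorem IsPSHOn.const_mul {f : V → ℝ} {Ω : Set V} (hf : IsPSHOn f Ω) {c : ℝ} (hc : 0 < c) :
    IsPSHOn (fun z => c * f z) Ω := by
  obtain ⟨husc, hmean⟩ := isPSHOn_iff.1 hf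
  refine isPSHOn_iff.2 ⟨(continuous_const.mul continuous_id).comp_upperSemicontinuousOn husc
    fun _ _ h => mul_le_mul_of_nonneg_left h hc.le, fun a ha b r hr hdisc g hg hfg => ?_⟩
  have hmean' := hmean a ha b r hr hdisc (fun θ => c⁻¹ * g θ) (continuous_const.mul hg)
    fun θ => (le_inv_mul_iff₀ hc).2 (hfg θ)
  rw [intervalIntegral.integral_const_mul, mul_left_comm, le_inv_mul_iff₀ hc] at hmean'
  exact hmean'

end PSH

section RelExtremal

variable {V : Type*} [NormedAddCommGroup V] [NormedSpace ℂ V] {E F K Ω : Set V} {z : V}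

theorem relExtremal_nonpos (hz : z ∈ Ω) : relExtremal E Ω z ≤ 0 :=
  Real.sSup_nonpos (by rintro _ ⟨f, -, hf0, -, rfl⟩; exact hf0 z hz)

theorem le_relExtremal (hz : z ∈ Ω) {f : V → ℝ} (hf : IsPSHOn f Ω) (hf0 : ∀ x ∈ Ω, f x ≤ 0)
    (hfE : ∀ x ∈ E, f x ≤ -1) : f z ≤ relExtremal E Ω z :=
  le_csSup ⟨0, by rintro _ ⟨g, -, hg0, -, rfl⟩; exact hg0 z hz⟩ ⟨f, hf, hf0, hfE, rfl⟩

theorem relExtremal_le {b : ℝ}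
    (h : ∀ f : V → ℝ, IsPSHOn f Ω → (∀ x ∈ Ω, f x ≤ 0) → (∀ x ∈ E, f x ≤ -1) → f z ≤ b) :
    relExtremal E Ω z ≤ b :=
  csSup_le ⟨-1, fun _ => -1, isPSHOn_const _ _, fun _ _ => by norm_num, fun _ _ => le_rfl, rfl⟩
    (by rintro _ ⟨f, hf, hf0, hfE, rfl⟩; exact h f hf hf0 hfE)

theorem bddAbove_relExtremal_image (hK : K ⊆ Ω) : BddAbove (relExtremal E Ω '' K) :=
  ⟨0, forall_mem_image.2 fun _ hx => relExtremal_nonpos (hK hx)⟩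

theorem sSup_relExtremal_image_nonpos (hK : K ⊆ Ω) : sSup (relExtremal E Ω '' K) ≤ 0 :=
  Real.sSup_nonpos (forall_mem_image.2 fun _ hx => relExtremal_nonpos (hK hx))

theorem relExtremal_le_mul_relExtremal {c : ℝ} (hc : 0 < c) (hF : F ⊆ Ω)
    (hEF : ∀ x ∈ F, relExtremal E Ω x ≤ -c) (hz : z ∈ Ω) :
    relExtremal E Ω z ≤ c * relExtremal F Ω z := by
  refine relExtremal_le fun f hf hf0 hfE => ?_
  rw [← inv_mul_le_iff₀ hc]
  refine le_relExtremal hz (hf.const_mul (inv_pos.2 hc))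
    (fun x hx => mul_nonpos_of_nonneg_of_nonpos (inv_pos.2 hc).le (hf0 x hx)) fun x hx => ?_
  rw [inv_mul_le_iff₀ hc]
  linarith [le_relExtremal (hF hx) hf hf0 hfE, hEF x hx]

theorem sSup_relExtremal_image_le_mul {c : ℝ} (hc : 0 < c) (hF : F ⊆ Ω)
    (hEF : ∀ x ∈ F, relExtremal E Ω x ≤ -c) (hK : K ⊆ Ω) (hK₀ : K.Nonempty) :
    sSup (relExtremal E Ω '' K) ≤ c * sSup (relExtremal F Ω '' K) :=
  csSup_le (hK₀.image _) <| forall_mem_image.2 fun _ hz =>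
    (relExtremal_le_mul_relExtremal hc hF hEF (hK hz)).trans <|
      mul_le_mul_of_nonneg_left (le_csSup (bddAbove_relExtremal_image hK) (mem_image_of_mem _ hz))
        hc.le

end RelExtremal

theorem norm_embedR {n : ℕ} (x : EuclideanSpace ℝ (Fin n)) : ‖embedR x‖ = ‖x‖ := by
  simp [EuclideanSpace.norm_eq, embedR]

theorem embedR_image_ball_subset_ball (n : ℕ) (r : ℝ) :
    embedR '' ball (0 : EuclideanSpace ℝ (Fin n)) r ⊆ ball 0 r := by
  rintro _ ⟨x, hx, rfl⟩
  simpa [norm_embedR] using hx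

theorem relExtremal_sup_submul_general (n : ℕ) (a : ℝ) (ha : 1 < a)
    (E : Set (EuclideanSpace ℝ (Fin n))) :
    |sSup (relExtremal (embedR '' E) (Metric.ball 0 a) ''
        Metric.ball (0 : EuclideanSpace ℂ (Fin n)) 1)| ≥
      |sSup (relExtremal (embedR '' (Metric.ball (0 : EuclideanSpace ℝ (Fin n)) 1))
          (Metric.ball 0 a) '' Metric.ball (0 : EuclideanSpace ℂ (Fin n)) 1)| *
      |sSup (relExtremal (embedR '' E) (Metric.ball 0 a) ''
          (embedR '' Metric.ball (0 : EuclideanSpace ℝ (Fin n)) 1))| := by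
  have hBc : ball (0 : EuclideanSpace ℂ (Fin n)) 1 ⊆ ball 0 a := ball_subset_ball ha.le
  have hBr := (embedR_image_ball_subset_ball n 1).trans hBc
  set C := sSup (relExtremal (embedR '' E) (ball 0 a) '' (embedR '' ball 0 1))
  have hC₀ : C ≤ 0 := sSup_relExtremal_image_nonpos hBr
  rcases hC₀.lt_or_eq with hC | hC
  · have hEBr : ∀ x ∈ embedR '' ball 0 1, relExtremal (embedR '' E) (ball 0 a) x ≤ -(-C) :=
      fun x hx => by rw [neg_neg]; exact le_csSup (bddAbove_relExtremal_image hBr) ⟨x, hx, rfl⟩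
    have hAB := sSup_relExtremal_image_le_mul (neg_pos.2 hC) hBr hEBr hBc ⟨0, mem_ball_self one_pos⟩
    rw [abs_of_nonpos (sSup_relExtremal_image_nonpos hBc),
      abs_of_nonpos (sSup_relExtremal_image_nonpos hBc), abs_of_neg hC]
    linarith
  · rw [hC, abs_zero, mul_zero]
    exact abs_nonneg _

/-- submultiplicativity of the relative extremal function suprema. -/
theorem relExtremal_sup_submul (n : ℕ) (a : ℝ) (ha : 1 < a)
    (E : Set (EuclideanSpace ℝ (Fin n))) (hE : E ⊆ Metric.ball 0 1)
    (hmeas : MeasurableSet E) (hnp : ¬ IsPluripolar (embedR '' E)) :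
    |sSup (relExtremal (embedR '' E) (Metric.ball 0 a) ''
        Metric.ball (0 : EuclideanSpace ℂ (Fin n)) 1)| ≥
      |sSup (relExtremal (embedR '' (Metric.ball (0 : EuclideanSpace ℝ (Fin n)) 1))
          (Metric.ball 0 a) '' Metric.ball (0 : EuclideanSpace ℂ (Fin n)) 1)| *
      |sSup (relExtremal (embedR '' E) (Metric.ball 0 a) ''
          (embedR '' Metric.ball (0 : EuclideanSpace ℝ (Fin n)) 1))| :=
  relExtremal_sup_submul_general n a ha E
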